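/- Let K = ℚ(√m) (m > 0 squarefree) be a real quadratic field of class number one, and let ε be a unit of O_K. Assume the abc conjecture for K. For each n ∈ ℕ write ε^n − 1 = u_n·v_n with u_n the squarefree part and v_n the squarefull part of ε^n − 1. Then for every δ > 0 there is a constant C(K,δ) such that for all n ≥ 1 (with ε^n ≠ 1), |ε^n| ≤ C(K,δ)·(N(u_n)²·√(N(v_n)))^(1+δ), where |·| is the absolute value under a fixed real embedding of K. -/

import Mathlib

open NumberField IsDedekindDomain Filter
open scoped Classical

variable (K : Type*) [Field K] [NumberField K]

/-- The absolute value of the norm `N_{K/ℚ}` of an algebraic integer, as a natural number. -/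
noncomputable def absNormElem (x : 𝓞 K) : ℕ := (Algebra.norm ℤ x).natAbs

/-- `v_𝔭(p)`: the ramification index of the prime ideal `𝔭 = v.asIdeal` over the rational
prime `p` lying below it (`pℤ = 𝔭 ∩ ℤ`). -/
noncomputable def ramIdxOverQ (v : HeightOneSpectrum (𝓞 K)) : ℕ :=
  Ideal.ramificationIdx'
    (Ideal.comap (algebraMap ℤ (𝓞 K)) v.asIdeal) v.asIdeal

/-- `‖x‖_v = N(𝔭)^(−v_𝔭(x))` for a finite place `v`, with `‖0‖_v = 0`. -/
noncomputable def normAtFin (v : HeightOneSpectrum (𝓞 K)) (x : K) : ℝ :=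
  if h : v.valuation K x = 0 then 0
  else (Ideal.absNorm v.asIdeal : ℝ) ^ (Multiplicative.toAdd (WithZero.unzero h))

/-- `‖x‖_w = |g(x)|^e` for an archimedean place `w`, where `e = 1` if `w` is real and
`e = 2` if `w` is complex. -/
noncomputable def normAtInf (w : InfinitePlace K) (x : K) : ℝ := (w x) ^ w.mult

/-- The height `H_K(a,b,c) = ∏_v max(‖a‖_v, ‖b‖_v, ‖c‖_v)`, the product running over all
(finite and infinite) places of `K`. -/
noncomputable def heightK (a b c : K) : ℝ :=
  (∏ᶠ v : HeightOneSpectrum (𝓞 K),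
      max (max (normAtFin K v a) (normAtFin K v b)) (normAtFin K v c)) *
  ∏ w : InfinitePlace K,
      max (max (normAtInf K w a) (normAtInf K w b)) (normAtInf K w c)

/-- The radical `rad_K(a,b,c) = ∏_{𝔭 ∈ I_K(a,b,c)} N(𝔭)^(v_𝔭(p))`, where `I_K(a,b,c)` is the
set of prime ideals of `𝓞 K` at which `‖a‖_v, ‖b‖_v, ‖c‖_v` are not all equal. -/
noncomputable def radK (a b c : K) : ℝ :=
  ∏ᶠ v : HeightOneSpectrum (𝓞 K),
    if normAtFin K v a = normAtFin K v b ∧ normAtFin K v b = normAtFin K v c then 1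
    else (Ideal.absNorm v.asIdeal : ℝ) ^ (ramIdxOverQ K v)

/-- The abc conjecture for the number field `K`: for every `δ > 0` there is a constant
`C(K,δ)` such that `H_K(a,b,c) ≤ C(K,δ) · rad_K(a,b,c)^(1+δ)` for all nonzero
`a, b, c ∈ K` with `a + b + c = 0`. -/
noncomputable def AbcConjecture : Prop :=
  ∀ δ : ℝ, 0 < δ → ∃ C : ℝ, 0 < C ∧ ∀ a b c : K, a ≠ 0 → b ≠ 0 → c ≠ 0 →
    a + b + c = 0 → heightK K a b c ≤ C * (radK K a b c) ^ (1 + δ)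

/-!
Apply abc to `ε ^ n + (-1) + (-(u n * v n)) = 0`. All three terms are integral and `-1` is a
unit, so every finite place contributes `1` to the height, while the real place of `φ` alone
contributes at least `|φ ε| ^ n`. The radical is `∏_{𝔭 ∣ u v} N𝔭 ^ e𝔭`; writing
`N𝔭 ^ e𝔭 = N𝔭 · N𝔭 ^ (e𝔭 - 1)` and using `𝔭 ^ (e𝔭 - 1) ∣ 𝔇_K` bounds it by
`|d_K| · ∏_{𝔭 ∣ u} N𝔭 · ∏_{𝔭 ∣ v} N𝔭 ≤ |d_K| · N(u) · √N(v)`, the last factor because `v` is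
squarefull, which class number one transfers from prime elements to prime ideals.
-/

section PrimeDivisors

variable {R : Type*} [CommRing R]

lemma disjoint_setOf_mem_asIdeal {x y : R} (h : IsCoprime x y) :
    Disjoint {v : HeightOneSpectrum R | x ∈ v.asIdeal} {v | y ∈ v.asIdeal} := by
  refine Set.disjoint_left.2 fun v hx hy => v.isPrime.ne_top ?_
  obtain ⟨a, b, hab⟩ := h
  rw [Ideal.eq_top_iff_one, ← hab]
  exact add_mem (Ideal.mul_mem_left _ a hx) (Ideal.mul_mem_left _ b hy)

lemma sq_asIdeal_dvd_span_of_squarefull [IsDomain R] [IsPrincipalIdealRing R] {x : R}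
    (hx : ∀ π : R, Prime π → π ∣ x → π ^ 2 ∣ x) {v : HeightOneSpectrum R}
    (hv : x ∈ v.asIdeal) : v.asIdeal ^ 2 ∣ Ideal.span {x} := by
  set π := Submodule.IsPrincipal.generator v.asIdeal
  have hπ : Ideal.span {π} = v.asIdeal := Ideal.span_singleton_generator _
  have hπx : π ∣ x := by rwa [← Ideal.mem_span_singleton, hπ]
  rw [← hπ, Ideal.span_singleton_pow, Ideal.span_singleton_dvd_span_singleton_iff_dvd]
  exact hx π (Submodule.IsPrincipal.prime_generator_of_isPrime _ v.ne_bot) hπx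

variable [IsDedekindDomain R]

lemma finite_setOf_mem_asIdeal {x : R} (hx : x ≠ 0) :
    {v : HeightOneSpectrum R | x ∈ v.asIdeal}.Finite := by
  simpa only [Ideal.dvd_span_singleton] using
    Ideal.finite_factors (I := Ideal.span {x}) (by simpa using hx)

lemma finprod_mem_absNorm_pow_dvd [Module.Free ℤ R] {s : Set (HeightOneSpectrum R)}
    (hs : s.Finite) (k : HeightOneSpectrum R → ℕ) {I : Ideal R}
    (h : ∀ v ∈ s, v.asIdeal ^ k v ∣ I) :
    ∏ᶠ v ∈ s, Ideal.absNorm v.asIdeal ^ k v ∣ Ideal.absNorm I := by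
  simp_rw [finprod_mem_eq_finite_toFinset_prod _ hs, ← map_pow, ← map_prod]
  refine map_dvd _ (Finset.prod_dvd_of_coprime (fun v _ w _ hvw => ?_) fun v hv => ?_)
  · exact (HeightOneSpectrum.isCoprime_of_ne v w hvw).pow
  · exact h v (hs.mem_toFinset.1 hv)

end PrimeDivisors

section

variable {K}

section FinitePlaces

variable {v : HeightOneSpectrum (𝓞 K)}

lemma normAtFin_le_one_iff {x : K} (hx : x ≠ 0) :
    normAtFin K v x ≤ 1 ↔ v.valuation K x ≤ 1 := by
  have hv : v.valuation K x ≠ 0 := (Valuation.ne_zero_iff _).mpr hx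
  rw [normAtFin, dif_neg hv,
    zpow_le_one_iff_right₀ (mod_cast NumberField.HeightOneSpectrum.one_lt_absNorm v)]
  conv_rhs => rw [← WithZero.coe_unzero hv, ← WithZero.coe_one, WithZero.coe_le_coe]
  rfl

lemma normAtFin_eq_one_iff {x : K} (hx : x ≠ 0) :
    normAtFin K v x = 1 ↔ v.valuation K x = 1 := by
  have hv : v.valuation K x ≠ 0 := (Valuation.ne_zero_iff _).mpr hx
  rw [normAtFin, dif_neg hv, zpow_eq_one_iff_right₀ (by positivity)
    (mod_cast (NumberField.HeightOneSpectrum.one_lt_absNorm v).ne')]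
  conv_rhs => rw [← WithZero.coe_unzero hv, ← WithZero.coe_one, WithZero.coe_inj]
  rfl

lemma normAtFin_algebraMap_le_one (y : 𝓞 K) : normAtFin K v (algebraMap (𝓞 K) K y) ≤ 1 := by
  rcases eq_or_ne y 0 with rfl | hy
  · simp [normAtFin]
  rw [normAtFin_le_one_iff (by simpa using hy)]
  exact v.valuation_le_one y

lemma normAtFin_algebraMap_eq_one_iff {y : 𝓞 K} (hy : y ≠ 0) :
    normAtFin K v (algebraMap (𝓞 K) K y) = 1 ↔ y ∉ v.asIdeal := by
  rw [normAtFin_eq_one_iff (by simpa using hy), v.valuation_eq_one_iff_notMem]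

lemma normAtFin_neg_one : normAtFin K v (-1) = 1 := by
  rw [normAtFin_eq_one_iff (by norm_num), Valuation.map_neg, Valuation.map_one]

end FinitePlaces

section Height

lemma normAtInf_le_heightK_neg_one (a c : 𝓞 K) (w : InfinitePlace K) :
    normAtInf K w (algebraMap (𝓞 K) K a) ≤
      heightK K (algebraMap (𝓞 K) K a) (-1) (algebraMap (𝓞 K) K c) := by
  set F : InfinitePlace K → ℝ := fun w => max (max (normAtInf K w (algebraMap (𝓞 K) K a))
    (normAtInf K w (-1))) (normAtInf K w (algebraMap (𝓞 K) K c))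
  have hfin : ∀ v : HeightOneSpectrum (𝓞 K), max (max (normAtFin K v (algebraMap (𝓞 K) K a))
      (normAtFin K v (-1))) (normAtFin K v (algebraMap (𝓞 K) K c)) = 1 := fun v => by
    rw [normAtFin_neg_one, max_eq_right (normAtFin_algebraMap_le_one a),
      max_eq_left (normAtFin_algebraMap_le_one c)]
  have hF : ∀ w, 1 ≤ F w := fun w => le_max_of_le_left (le_max_of_le_right
    (by simp [normAtInf, ← InfinitePlace.norm_embedding_eq]))
  calc normAtInf K w (algebraMap (𝓞 K) K a) ≤ F w := le_max_of_le_left (le_max_left _ _)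
    _ ≤ F w * ∏ w' ∈ Finset.univ.erase w, F w' :=
      le_mul_of_one_le_right (zero_le_one.trans (hF w)) (Finset.one_le_prod fun w _ => hF w)
    _ = heightK K (algebraMap (𝓞 K) K a) (-1) (algebraMap (𝓞 K) K c) := by
      rw [Finset.mul_prod_erase _ _ (Finset.mem_univ w), heightK,
        finprod_eq_one_of_forall_eq_one hfin, one_mul]

omit [NumberField K] in
lemma normAtInf_mk_ofRealHom_comp (φ : K →+* ℝ) (x : K) :
    normAtInf K (InfinitePlace.mk (Complex.ofRealHom.comp φ)) x = |φ x| := by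
  have hreal : (InfinitePlace.mk (Complex.ofRealHom.comp φ)).IsReal := by
    rw [InfinitePlace.isReal_mk_iff, ComplexEmbedding.isReal_iff]
    ext x
    simp [ComplexEmbedding.conjugate_coe_eq]
  rw [normAtInf, InfinitePlace.mult, if_pos hreal, pow_one, InfinitePlace.apply]
  simp

end Height

section Ramification

lemma ramIdxOverQ_ne_zero (v : HeightOneSpectrum (𝓞 K)) : ramIdxOverQ K v ≠ 0 :=
  Ideal.IsDedekindDomain.ramificationIdx'_ne_zero_of_liesOver v.asIdeal
    (Ideal.under_ne_bot ℤ v.ne_bot)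

lemma pow_ramIdxOverQ_sub_one_dvd_differentIdeal (v : HeightOneSpectrum (𝓞 K)) :
    v.asIdeal ^ (ramIdxOverQ K v - 1) ∣ differentIdeal ℤ (𝓞 K) := by
  have hp : Ideal.comap (algebraMap ℤ (𝓞 K)) v.asIdeal ≠ ⊥ := Ideal.under_ne_bot ℤ v.ne_bot
  have : (Ideal.comap (algebraMap ℤ (𝓞 K)) v.asIdeal).IsMaximal :=
    (Ideal.IsPrime.comap _).isMaximal hp
  exact pow_sub_one_dvd_differentIdeal (A := ℤ) v.asIdeal _ hp
    (Ideal.dvd_iff_le.mpr Ideal.le_pow_ramificationIdx')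

lemma finprod_mem_absNorm_pow_ramIdxOverQ_le {s : Set (HeightOneSpectrum (𝓞 K))}
    (hs : s.Finite) :
    ∏ᶠ v ∈ s, Ideal.absNorm v.asIdeal ^ ramIdxOverQ K v ≤
      (∏ᶠ v ∈ s, Ideal.absNorm v.asIdeal) * (discr K).natAbs := by
  have hsplit : ∀ v : HeightOneSpectrum (𝓞 K), Ideal.absNorm v.asIdeal ^ ramIdxOverQ K v =
      Ideal.absNorm v.asIdeal * Ideal.absNorm v.asIdeal ^ (ramIdxOverQ K v - 1) := fun v => by
    rw [← pow_succ', Nat.sub_add_cancel (Nat.one_le_iff_ne_zero.2 (ramIdxOverQ_ne_zero v))]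
  rw [finprod_mem_congr rfl fun v _ => hsplit v, finprod_mem_mul_distrib hs]
  refine Nat.mul_le_mul_left _ (Nat.le_of_dvd (Int.natAbs_pos.2 (discr_ne_zero K)) ?_)
  rw [← absNorm_differentIdeal K (𝓞 K)]
  exact finprod_mem_absNorm_pow_dvd hs _ fun v _ => pow_ramIdxOverQ_sub_one_dvd_differentIdeal v

end Ramification

section Radical

lemma radK_neg_one_eq_finprod (η : (𝓞 K)ˣ) {c : 𝓞 K} (hc : c ≠ 0) :
    radK K (algebraMap (𝓞 K) K η) (-1) (algebraMap (𝓞 K) K c) =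
      ∏ᶠ v ∈ {v : HeightOneSpectrum (𝓞 K) | c ∈ v.asIdeal},
        (Ideal.absNorm v.asIdeal : ℝ) ^ ramIdxOverQ K v := by
  rw [radK, finprod_mem_def]
  refine finprod_congr fun v => ?_
  have hη : normAtFin K v (algebraMap (𝓞 K) K η) = 1 :=
    (normAtFin_algebraMap_eq_one_iff η.ne_zero).2 fun h => v.isPrime.ne_top
      (Ideal.eq_top_of_isUnit_mem _ h η.isUnit)
  have hneg := normAtFin_neg_one (v := v)
  set S := {v : HeightOneSpectrum (𝓞 K) | c ∈ v.asIdeal}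
  by_cases hcv : c ∈ v.asIdeal
  · rw [Set.mulIndicator_of_mem (s := S) hcv, if_neg]
    rintro ⟨-, h⟩
    exact (normAtFin_algebraMap_eq_one_iff hc).1 (hneg ▸ h).symm hcv
  · rw [Set.mulIndicator_of_notMem (s := S) hcv,
      if_pos ⟨hη.trans hneg.symm, hneg.trans ((normAtFin_algebraMap_eq_one_iff hc).2 hcv).symm⟩]

lemma finprod_mem_absNorm_pow_le_absNormElem {x : 𝓞 K} (hx : x ≠ 0) (k : ℕ)
    (h : ∀ v : HeightOneSpectrum (𝓞 K), x ∈ v.asIdeal → v.asIdeal ^ k ∣ Ideal.span {x}) :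
    (∏ᶠ v ∈ {v : HeightOneSpectrum (𝓞 K) | x ∈ v.asIdeal}, Ideal.absNorm v.asIdeal) ^ k ≤
      absNormElem K x := by
  have hfin := finite_setOf_mem_asIdeal hx
  have hpos : 0 < absNormElem K x := Int.natAbs_pos.2 (Algebra.norm_ne_zero_iff.2 hx)
  rw [finprod_mem_eq_finite_toFinset_prod _ hfin, ← Finset.prod_pow,
    ← finprod_mem_eq_finite_toFinset_prod _ hfin]
  refine Nat.le_of_dvd hpos ?_
  rw [absNormElem, ← Ideal.absNorm_span_singleton]
  exact finprod_mem_absNorm_pow_dvd hfin (fun _ => k) h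

lemma radK_neg_one_le (η : (𝓞 K)ˣ) {x y : 𝓞 K} (hx : x ≠ 0) (hy : y ≠ 0)
    (hxy : IsCoprime x y)
    (hy_sq : ∀ v : HeightOneSpectrum (𝓞 K), y ∈ v.asIdeal → v.asIdeal ^ 2 ∣ Ideal.span {y}) :
    radK K (algebraMap (𝓞 K) K η) (-1) (algebraMap (𝓞 K) K (-(x * y))) ≤
      (discr K).natAbs * (absNormElem K x * Real.sqrt (absNormElem K y)) := by
  set Sx := {v : HeightOneSpectrum (𝓞 K) | x ∈ v.asIdeal}
  set Sy := {v : HeightOneSpectrum (𝓞 K) | y ∈ v.asIdeal}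
  have hS : {v : HeightOneSpectrum (𝓞 K) | -(x * y) ∈ v.asIdeal} = Sx ∪ Sy :=
    Set.ext fun v => neg_mem_iff.trans v.isPrime.mul_mem_iff_mem_or_mem
  have hSx := finite_setOf_mem_asIdeal hx
  have hSy := finite_setOf_mem_asIdeal hy
  have hNx : ∏ᶠ v ∈ Sx, Ideal.absNorm v.asIdeal ≤ absNormElem K x := by
    have := finprod_mem_absNorm_pow_le_absNormElem hx 1
      fun v hv => by rwa [pow_one, Ideal.dvd_span_singleton]
    rwa [pow_one] at this
  have hNy : ((∏ᶠ v ∈ Sy, Ideal.absNorm v.asIdeal : ℕ) : ℝ) ≤ Real.sqrt (absNormElem K y) :=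
    Real.le_sqrt_of_sq_le (mod_cast finprod_mem_absNorm_pow_le_absNormElem hy 2 hy_sq)
  rw [radK_neg_one_eq_finprod η (neg_ne_zero.2 (mul_ne_zero hx hy)), hS]
  calc ∏ᶠ v ∈ Sx ∪ Sy, (Ideal.absNorm v.asIdeal : ℝ) ^ ramIdxOverQ K v
      = ((∏ᶠ v ∈ Sx ∪ Sy, Ideal.absNorm v.asIdeal ^ ramIdxOverQ K v : ℕ) : ℝ) := by
        rw [Nat.cast_finprod_mem (hSx.union hSy)]
        push_cast
        rfl
    _ ≤ ((∏ᶠ v ∈ Sx ∪ Sy, Ideal.absNorm v.asIdeal) * (discr K).natAbs : ℕ) :=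
        mod_cast finprod_mem_absNorm_pow_ramIdxOverQ_le (hSx.union hSy)
    _ = (discr K).natAbs * ((∏ᶠ v ∈ Sx, Ideal.absNorm v.asIdeal : ℕ) *
          ((∏ᶠ v ∈ Sy, Ideal.absNorm v.asIdeal : ℕ) : ℝ)) := by
        rw [finprod_mem_union (disjoint_setOf_mem_asIdeal hxy) hSx hSy]
        push_cast
        ring
    _ ≤ (discr K).natAbs * (absNormElem K x * Real.sqrt (absNormElem K y)) := by
        gcongr

lemma radK_nonneg (a b c : K) : 0 ≤ radK K a b c :=
  finprod_nonneg fun v => by split_ifs <;> positivity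

end Radical

end

theorem abc_bound_real_quadratic
    (hclass : NumberField.classNumber K = 1)
    (φ : K →+* ℝ)
    (ε : (𝓞 K)ˣ)
    (habc : AbcConjecture K)
    (u v : ℕ → 𝓞 K)
    (huv : ∀ n : ℕ, (ε : 𝓞 K) ^ n - 1 = u n * v n)
    (hv : ∀ n : ℕ, ∀ π : 𝓞 K, Prime π → π ∣ v n → π ^ 2 ∣ v n)
    (hcop : ∀ n : ℕ, IsCoprime (u n) (v n)) :
    ∀ δ : ℝ, 0 < δ → ∃ C : ℝ, 0 < C ∧ ∀ n : ℕ, 1 ≤ n → (ε : 𝓞 K) ^ n ≠ 1 →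
      |φ (algebraMap (𝓞 K) K (ε : 𝓞 K))| ^ n ≤
        C * ((absNormElem K (u n) : ℝ) ^ 2 *
          Real.sqrt (absNormElem K (v n))) ^ (1 + δ) := by
  intro δ hδ
  obtain ⟨C, hC, habcδ⟩ := habc δ hδ
  have : IsPrincipalIdealRing (𝓞 K) := NumberField.classNumber_eq_one_iff.mp hclass
  have hdiscr : (0 : ℝ) < (discr K).natAbs := mod_cast Int.natAbs_pos.2 (discr_ne_zero K)
  refine ⟨C * ((discr K).natAbs : ℝ) ^ (1 + δ), by positivity, fun n _ hn => ?_⟩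
  have huv0 : u n * v n ≠ 0 := huv n ▸ sub_ne_zero.2 hn
  have hsum : algebraMap (𝓞 K) K ↑(ε ^ n) + -1 + algebraMap (𝓞 K) K (-(u n * v n)) = 0 := by
    rw [← huv n]
    push_cast
    ring
  have hrad := radK_neg_one_le (ε ^ n) (left_ne_zero_of_mul huv0) (right_ne_zero_of_mul huv0)
    (hcop n) fun w hw => sq_asIdeal_dvd_span_of_squarefull (hv n) hw
  have hNu : (absNormElem K (u n) : ℝ) ≤ (absNormElem K (u n) : ℝ) ^ 2 :=
    le_self_pow₀ (mod_cast Int.natAbs_pos.2 (Algebra.norm_ne_zero_iff.2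
      (left_ne_zero_of_mul huv0))) two_ne_zero
  calc |φ (algebraMap (𝓞 K) K (ε : 𝓞 K))| ^ n
      = normAtInf K (InfinitePlace.mk (Complex.ofRealHom.comp φ))
          (algebraMap (𝓞 K) K ↑(ε ^ n)) := by
        rw [normAtInf_mk_ofRealHom_comp]
        simp
    _ ≤ heightK K (algebraMap (𝓞 K) K ↑(ε ^ n)) (-1) (algebraMap (𝓞 K) K (-(u n * v n))) :=
        normAtInf_le_heightK_neg_one _ _ _
    _ ≤ C * radK K (algebraMap (𝓞 K) K ↑(ε ^ n)) (-1) (algebraMap (𝓞 K) K (-(u n * v n)))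
          ^ (1 + δ) :=
        habcδ _ _ _ (by simp) (by simp) (by simpa using huv0) hsum
    _ ≤ C * ((discr K).natAbs * ((absNormElem K (u n) : ℝ) ^ 2 *
          Real.sqrt (absNormElem K (v n)))) ^ (1 + δ) := by
        gcongr
        · exact radK_nonneg _ _ _
        · exact hrad.trans (by gcongr)
    _ = C * ((discr K).natAbs : ℝ) ^ (1 + δ) * ((absNormElem K (u n) : ℝ) ^ 2 *
          Real.sqrt (absNormElem K (v n))) ^ (1 + δ) := by
        rw [Real.mul_rpow (by positivity) (by positivity)]
        ring
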